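/- Let p = 2n+1 be an odd prime. Let C_p be the 2n×2n integer matrix with 1's on the subdiagonal, last column all equal to −1, and 0's elsewhere (the companion matrix of the minimal polynomial 1 + t + ⋯ + t^{p−1} of e^{2πi/p}). Let E*_{2n} be the 2n×2n matrix with (j,k)-entry 1 if j+k = 2n+1 and 0 otherwise, and let Q be the 2n×2n matrix with Q_{i,1} = −1 for all i, Q_{i,j} = 1 if i ≥ 2 and i+j = 2n+2, and 0 otherwise. Define 4n×4n complex block matrices A = [[0, E_{2n}],[−E_{2n}, 0]], B = [[0, C_p],[−C_p⁻¹, 0]], Â = [[i·E*_{2n}, 0],[0, −i·E*_{2n}]], B̂ = [[i·Q, 0],[0, −i·Q]]. Then there exists an invertible matrix M ∈ GL(4n,ℂ) such that M·A·M⁻¹ = Â and M·B·M⁻¹ = B̂; indeed M = (1/√2)·[[E_{2n}, −i·E*_{2n}],[E_{2n}, i·E*_{2n}]] works. -/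
import Mathlib


open Finset Matrix Complex

/-- The 2n×2n complex matrix `C_p`: 1's on the subdiagonal, last column all `-1`,
0's elsewhere (companion matrix of `1 + t + ⋯ + t^{p-1}`, `p = 2n+1`). -/
noncomputable def CpMat (n : ℕ) : Matrix (Fin (2 * n)) (Fin (2 * n)) ℂ :=
  Matrix.of fun i j =>
    if (j : ℕ) = 2 * n - 1 then -1
    else if (i : ℕ) = (j : ℕ) + 1 then 1 else 0

/-- The 2n×2n matrix `E*` with (j,k)-entry 1 iff `j + k = 2n+1` (1-based). -/
noncomputable def Estar (n : ℕ) : Matrix (Fin (2 * n)) (Fin (2 * n)) ℂ :=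
  Matrix.of fun i j => if (i : ℕ) + (j : ℕ) = 2 * n - 1 then 1 else 0

/-- The 2n×2n matrix `Q` (1-based: `Q_{i,1} = -1` for all `i`, `Q_{i,j} = 1` if
`i ≥ 2` and `i + j = 2n+2`, and `0` otherwise); this is `π₀(y)`. -/
noncomputable def QmatC (n : ℕ) : Matrix (Fin (2 * n)) (Fin (2 * n)) ℂ :=
  Matrix.of fun i j =>
    if (j : ℕ) = 0 then -1
    else if 1 ≤ (i : ℕ) ∧ (i : ℕ) + (j : ℕ) = 2 * n then 1 else 0

/-- Identification of `Fin (2n) ⊕ Fin (2n)` with `Fin (4n)`. -/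
def sumEquiv4 (n : ℕ) : (Fin (2 * n) ⊕ Fin (2 * n)) ≃ Fin (4 * n) :=
  finSumFinEquiv.trans (finCongr (by ring))

/-- The block matrix `A = [[0, E],[−E, 0]]`. -/
noncomputable def Amat (n : ℕ) : Matrix (Fin (4 * n)) (Fin (4 * n)) ℂ :=
  (Matrix.reindex (sumEquiv4 n) (sumEquiv4 n))
    (Matrix.fromBlocks 0 1 (-1) (0 : Matrix (Fin (2 * n)) (Fin (2 * n)) ℂ))

/-- The block matrix `B = [[0, C_p],[−C_p⁻¹, 0]]`. -/
noncomputable def Bmat (n : ℕ) : Matrix (Fin (4 * n)) (Fin (4 * n)) ℂ :=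
  (Matrix.reindex (sumEquiv4 n) (sumEquiv4 n))
    (Matrix.fromBlocks 0 (CpMat n) (-(CpMat n)⁻¹) 0)

/-- The block matrix `Â = [[i·E*, 0],[0, −i·E*]]`. -/
noncomputable def AhatMat (n : ℕ) : Matrix (Fin (4 * n)) (Fin (4 * n)) ℂ :=
  (Matrix.reindex (sumEquiv4 n) (sumEquiv4 n))
    (Matrix.fromBlocks (Complex.I • Estar n) 0 0 ((-Complex.I) • Estar n))

/-- The block matrix `B̂ = [[i·Q, 0],[0, −i·Q]]`. -/
noncomputable def BhatMat (n : ℕ) : Matrix (Fin (4 * n)) (Fin (4 * n)) ℂ :=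
  (Matrix.reindex (sumEquiv4 n) (sumEquiv4 n))
    (Matrix.fromBlocks (Complex.I • QmatC n) 0 0 ((-Complex.I) • QmatC n))

/-- The matrix `M = (1/√2)·[[E, −i·E*],[E, i·E*]]`. -/
noncomputable def Mmat (n : ℕ) : Matrix (Fin (4 * n)) (Fin (4 * n)) ℂ :=
  ((Real.sqrt 2 : ℂ))⁻¹ •
    (Matrix.reindex (sumEquiv4 n) (sumEquiv4 n))
      (Matrix.fromBlocks 1 ((-Complex.I) • Estar n) 1 (Complex.I • Estar n))

section Aux

lemma aux_sum_two {N : ℕ} (f : Fin N → ℂ) (a b : Fin N) (hab : a ≠ b)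
    (h : ∀ j, j ≠ a → j ≠ b → f j = 0) : ∑ j, f j = f a + f b := by
  rw [← Finset.sum_subset (Finset.subset_univ {a, b})
      (fun x _ hx => h x (fun h1 => hx (by simp [h1])) (fun h1 => hx (by simp [h1])))]
  exact Finset.sum_pair hab

lemma aux_estar_sq (n : ℕ) (hn : 1 ≤ n) : Estar n * Estar n = 1 := by
  ext i k
  rw [Matrix.mul_apply, Matrix.one_apply]
  have hi := i.isLt
  have hk := k.isLt
  rw [Finset.sum_eq_single (⟨2*n-1-(i:ℕ), by omega⟩ : Fin (2*n))]
  · simp only [Estar, Matrix.of_apply]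
    rw [if_pos (by omega)]
    by_cases h : i = k
    · subst h; rw [if_pos (by omega), if_pos rfl, one_mul]
    · rw [if_neg (by rw [Fin.ext_iff] at h; omega), if_neg h, mul_zero]
  · intro j _ hj
    have : (i:ℕ) + (j:ℕ) ≠ 2*n-1 := by
      intro h; apply hj; apply Fin.ext; simp; omega
    simp [Estar, this]
  · intro h; exact absurd (Finset.mem_univ _) h

lemma aux_q_sq (n : ℕ) (hn : 1 ≤ n) : QmatC n * QmatC n = 1 := by
  ext i k
  rw [Matrix.mul_apply, Matrix.one_apply]
  have hi := i.isLt
  have hk := k.isLt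
  simp only [QmatC, Matrix.of_apply]
  by_cases hi0 : (i : ℕ) = 0
  · rw [Finset.sum_eq_single (⟨0, by omega⟩ : Fin (2*n))]
    · simp only [Fin.ext_iff, Fin.val_mk]
      split_ifs <;> (first | ring1 | omega | exact (‹False›).elim | exact absurd trivial ‹¬True› | (exfalso; omega))
    · intro j _ hj
      have hj0 : (j:ℕ) ≠ 0 := fun h => hj (Fin.ext h)
      rw [if_neg hj0, if_neg (by omega)]; ring
    · intro h; exact absurd (Finset.mem_univ _) h
  · rw [aux_sum_two _ (⟨0, by omega⟩ : Fin (2*n)) ⟨2*n - (i:ℕ), by omega⟩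
        (Fin.ne_of_val_ne (by simp only [Fin.val_mk]; omega))
        (by intro j hj0 hj1
            have h0 : (j:ℕ) ≠ 0 := fun h => hj0 (Fin.ext h)
            have h1 : (j:ℕ) ≠ 2*n - (i:ℕ) := fun h => hj1 (Fin.ext h)
            rw [if_neg h0, if_neg (by omega)]; ring)]
    simp only [Fin.ext_iff, Fin.val_mk]
    split_ifs <;> (first | ring1 | omega | exact (‹False›).elim | exact absurd trivial ‹¬True› | (exfalso; omega))

lemma aux_qc (n : ℕ) (hn : 1 ≤ n) : QmatC n * CpMat n = Estar n := by
  ext i k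
  rw [Matrix.mul_apply]
  have hi := i.isLt
  have hk := k.isLt
  simp only [QmatC, CpMat, Estar, Matrix.of_apply]
  by_cases hklast : (k : ℕ) = 2*n - 1
  · by_cases hi0 : (i:ℕ) = 0
    · rw [Finset.sum_eq_single (⟨0, by omega⟩ : Fin (2*n))]
      · simp only [Fin.ext_iff, Fin.val_mk]
        split_ifs <;> (first | ring1 | omega | exact (‹False›).elim | exact absurd trivial ‹¬True› | (exfalso; omega))
      · intro j _ hj
        have hj0 : (j:ℕ) ≠ 0 := fun h => hj (Fin.ext h)
        rw [if_neg hj0, if_neg (by omega)]; ring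
      · intro h; exact absurd (Finset.mem_univ _) h
    · rw [aux_sum_two _ (⟨0, by omega⟩ : Fin (2*n)) ⟨2*n - (i:ℕ), by omega⟩
          (Fin.ne_of_val_ne (by simp only [Fin.val_mk]; omega))
          (by intro j hj0 hj1
              have h0 : (j:ℕ) ≠ 0 := fun h => hj0 (Fin.ext h)
              have h1 : (j:ℕ) ≠ 2*n - (i:ℕ) := fun h => hj1 (Fin.ext h)
              rw [if_neg h0, if_neg (by omega)]; ring)]
      simp only [Fin.ext_iff, Fin.val_mk]
      split_ifs <;> (first | ring1 | omega | exact (‹False›).elim | exact absurd trivial ‹¬True› | (exfalso; omega))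
  · rw [Finset.sum_eq_single (⟨(k:ℕ)+1, by omega⟩ : Fin (2*n))]
    · simp only [Fin.ext_iff, Fin.val_mk]
      split_ifs <;> (first | ring1 | omega | exact (‹False›).elim | exact absurd trivial ‹¬True› | (exfalso; omega))
    · intro j _ hj
      have hj0 : (j:ℕ) ≠ (k:ℕ)+1 := fun h => hj (Fin.ext h)
      rw [if_neg hklast, if_neg (fun h => hj0 h), mul_zero]
    · intro h; exact absurd (Finset.mem_univ _) h

lemma aux_reindex_mul (n : ℕ) (X Y : Matrix (Fin (2*n) ⊕ Fin (2*n)) (Fin (2*n) ⊕ Fin (2*n)) ℂ) :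
    (Matrix.reindex (sumEquiv4 n) (sumEquiv4 n)) X * (Matrix.reindex (sumEquiv4 n) (sumEquiv4 n)) Y
    = (Matrix.reindex (sumEquiv4 n) (sumEquiv4 n)) (X * Y) := by
  simp [Matrix.reindex_apply, Matrix.submatrix_mul_equiv]

lemma aux_reindex_one (n : ℕ) :
    (Matrix.reindex (sumEquiv4 n) (sumEquiv4 n))
      (1 : Matrix (Fin (2*n) ⊕ Fin (2*n)) (Fin (2*n) ⊕ Fin (2*n)) ℂ) = 1 := by
  simp [Matrix.reindex_apply, Matrix.submatrix_one_equiv]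

lemma aux_reindex_smul (n : ℕ) (a : ℂ)
    (X : Matrix (Fin (2*n) ⊕ Fin (2*n)) (Fin (2*n) ⊕ Fin (2*n)) ℂ) :
    (Matrix.reindex (sumEquiv4 n) (sumEquiv4 n)) (a • X)
    = a • (Matrix.reindex (sumEquiv4 n) (sumEquiv4 n)) X := rfl

lemma aux_fromBlocks_congr {l m : Type*} [Fintype l] [Fintype m]
    {A A' : Matrix l l ℂ} {B B' : Matrix l m ℂ} {C C' : Matrix m l ℂ} {D D' : Matrix m m ℂ}
    (h1 : A = A') (h2 : B = B') (h3 : C = C') (h4 : D = D') :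
    Matrix.fromBlocks A B C D = Matrix.fromBlocks A' B' C' D' := by
  rw [h1, h2, h3, h4]

lemma aux_sqrt2_sq : ((Real.sqrt 2 : ℂ))⁻¹ * ((Real.sqrt 2 : ℂ))⁻¹ = 2⁻¹ := by
  rw [← mul_inv]
  congr 1
  rw [← Complex.ofReal_mul, Real.mul_self_sqrt (by norm_num : (0:ℝ) ≤ 2)]
  norm_num

end Aux

theorem stmt_8 (n : ℕ) (hn : 1 ≤ n) (hp : Nat.Prime (2 * n + 1)) :
    ∃ M : Matrix (Fin (4 * n)) (Fin (4 * n)) ℂ, IsUnit M.det ∧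
      M * Amat n * M⁻¹ = AhatMat n ∧
      M * Bmat n * M⁻¹ = BhatMat n ∧
      M = Mmat n := by
  set E := Estar n with hEdef
  set Q := QmatC n with hQdef
  set C := CpMat n with hCdef
  have hE : E * E = 1 := aux_estar_sq n hn
  have hQ : Q * Q = 1 := aux_q_sq n hn
  have hQC : Q * C = E := aux_qc n hn
  have hC : C = Q * E := by rw [← hQC, ← mul_assoc, hQ, one_mul]
  have hCinv : C⁻¹ = E * Q := by
    apply Matrix.inv_eq_right_inv
    rw [hC, mul_assoc, ← mul_assoc E E Q, hE, one_mul, hQ]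
  set R := Matrix.reindex (sumEquiv4 n) (sumEquiv4 n) with hR
  set c : ℂ := ((Real.sqrt 2 : ℂ))⁻¹ with hc
  set X : Matrix (Fin (2*n) ⊕ Fin (2*n)) (Fin (2*n) ⊕ Fin (2*n)) ℂ :=
    Matrix.fromBlocks 1 ((-Complex.I) • E) 1 (Complex.I • E) with hX
  have hM : Mmat n = c • R X := rfl
  -- block identities
  have hIE1 : ((-Complex.I) • E) * (Complex.I • E) = 1 := by
    rw [smul_mul_assoc, mul_smul_comm, smul_smul, hE]
    simp [Complex.I_mul_I]
  have hIE2 : (Complex.I • E) * ((-Complex.I) • E) = 1 := by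
    rw [smul_mul_assoc, mul_smul_comm, smul_smul, hE]
    simp [Complex.I_mul_I]
  have hIE3 : (Complex.I • E) * (Complex.I • E) = -1 := by
    rw [smul_mul_assoc, mul_smul_comm, smul_smul, hE]
    simp [Complex.I_mul_I]
  have hIE4 : ((-Complex.I) • E) * ((-Complex.I) • E) = -1 := by
    rw [smul_mul_assoc, mul_smul_comm, smul_smul, hE]
    simp [Complex.I_mul_I]
  -- right inverse of M
  set Y : Matrix (Fin (2*n) ⊕ Fin (2*n)) (Fin (2*n) ⊕ Fin (2*n)) ℂ :=
    Matrix.fromBlocks 1 1 (Complex.I • E) ((-Complex.I) • E) with hY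
  have hXY : X * Y = (2:ℂ) • 1 := by
    rw [hX, hY, Matrix.fromBlocks_multiply]
    rw [show (1 : Matrix (Fin (2*n) ⊕ Fin (2*n)) (Fin (2*n) ⊕ Fin (2*n)) ℂ)
        = Matrix.fromBlocks 1 0 0 1 from Matrix.fromBlocks_one.symm, Matrix.fromBlocks_smul]
    refine aux_fromBlocks_congr ?_ ?_ ?_ ?_
    · rw [one_mul, hIE1]; module
    · rw [one_mul, hIE4]; module
    · rw [one_mul, hIE3]; module
    · rw [one_mul, hIE2]; module
  have hMright : Mmat n * (c • R Y) = 1 := by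
    rw [hM, smul_mul_assoc, mul_smul_comm, smul_smul, aux_reindex_mul, hXY,
      aux_reindex_smul, smul_smul, aux_sqrt2_sq]
    norm_num [aux_reindex_one]
  have hdet : IsUnit (Mmat n).det := Matrix.isUnit_det_of_right_inverse hMright
  have hMinv : (Mmat n)⁻¹ = c • R Y := Matrix.inv_eq_right_inv hMright
  -- conjugation identities at block level
  have hblockA : X * Matrix.fromBlocks 0 1 (-1) (0 : Matrix (Fin (2*n)) (Fin (2*n)) ℂ)
      = Matrix.fromBlocks (Complex.I • E) 0 0 ((-Complex.I) • E) * X := by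
    rw [hX, Matrix.fromBlocks_multiply, Matrix.fromBlocks_multiply]
    refine aux_fromBlocks_congr ?_ ?_ ?_ ?_
    · rw [mul_neg_one, mul_one]; simp
    · simp [hE, smul_smul, Complex.I_mul_I]
    · rw [mul_neg_one, mul_one]; simp
    · simp [hE, smul_smul, Complex.I_mul_I]
  have hblockB : X * Matrix.fromBlocks 0 C (-C⁻¹) (0 : Matrix (Fin (2*n)) (Fin (2*n)) ℂ)
      = Matrix.fromBlocks (Complex.I • Q) 0 0 ((-Complex.I) • Q) * X := by
    have hEC : E * C⁻¹ = Q := by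
      rw [hCinv, ← mul_assoc, hE, one_mul]
    have hQE : Q * E = C := hC.symm
    rw [hX, Matrix.fromBlocks_multiply, Matrix.fromBlocks_multiply]
    refine aux_fromBlocks_congr ?_ ?_ ?_ ?_
    · simp [mul_smul_comm, smul_mul_assoc, smul_smul, Complex.I_mul_I, hEC, hQE]
    · simp [mul_smul_comm, smul_mul_assoc, smul_smul, Complex.I_mul_I, hEC, hQE]
    · simp [mul_smul_comm, smul_mul_assoc, smul_smul, Complex.I_mul_I, hEC, hQE]
    · simp [mul_smul_comm, smul_mul_assoc, smul_smul, Complex.I_mul_I, hEC, hQE]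
  have hMA : Mmat n * Amat n = AhatMat n * Mmat n := by
    rw [hM]
    show c • R X * R _ = R _ * (c • R X)
    rw [smul_mul_assoc, mul_smul_comm, aux_reindex_mul, aux_reindex_mul, hblockA]
  have hMB : Mmat n * Bmat n = BhatMat n * Mmat n := by
    rw [hM]
    show c • R X * R _ = R _ * (c • R X)
    rw [smul_mul_assoc, mul_smul_comm, aux_reindex_mul, aux_reindex_mul, hblockB]
  refine ⟨Mmat n, hdet, ?_, ?_, rfl⟩
  · rw [hMA, mul_assoc, Matrix.mul_nonsing_inv _ hdet, mul_one]
  · rw [hMB, mul_assoc, Matrix.mul_nonsing_inv _ hdet, mul_one]
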